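/- arXiv:2409.07722 — 4 statements merged into one kernel-verified Lean document; each statement's English description precedes it below -/
import Mathlib

section
/- Let K be a compact metric space, and for i = 1,…,r let ψ_i : K → ℝ and g_i : K → ℝ^n be continuous. For p ∈ K set I(p) := {i : ψ_i(p) = 0} and define the set-valued map N(p) := {∑_{i ∈ I(p)} λ_i g_i(p) : λ_i ≥ 0} (with N(p) := {0} when I(p) = ∅). Assume there exists η > 0 such that ‖∑_{i ∈ I(p)} λ_i g_i(p)‖ > 2η whenever I(p) ≠ ∅, λ_i ≥ 0 and ∑_{i ∈ I(p)} λ_i = 1. Then N has closed graph: if p_n → p₀ in K, v_n ∈ N(p_n) and v_n → v₀, then v₀ ∈ N(p₀). -/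
/-!
Normalising a nonnegative combination of the active vectors to a convex one, the constraint
qualification gives `2η · (total weight) ≤ ‖v‖`, so the weights representing the convergent
sequence `v k` stay in a compact box. A subsequence of the weights converges; by continuity of
`ψ`, an index inactive at `p₀` is inactive at `p k` for large `k`, so its limit weight vanishes,
and the limit of the representations is a nonnegative combination of the vectors active at `p₀`.
-/

open Filter Topology

theorem mul_sum_le_norm_sum_smul {ι E : Type*} [NormedAddCommGroup E] [NormedSpace ℝ E]
    (s : Finset ι) (x : ι → E) (c : ℝ)
    (h : ∀ w : ι → ℝ, (∀ i, 0 ≤ w i) → ∑ i ∈ s, w i = 1 → c < ‖∑ i ∈ s, w i • x i‖)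
    (w : ι → ℝ) (hw : ∀ i, 0 ≤ w i) :
    c * ∑ i ∈ s, w i ≤ ‖∑ i ∈ s, w i • x i‖ := by
  rcases (Finset.sum_nonneg fun i _ => hw i : 0 ≤ ∑ i ∈ s, w i).eq_or_lt with hS | hS
  · rw [← hS, mul_zero]
    exact norm_nonneg _
  have hnorm := h (fun i => (∑ j ∈ s, w j)⁻¹ * w i)
    (fun i => mul_nonneg (inv_nonneg.2 hS.le) (hw i))
    (by rw [← Finset.mul_sum, inv_mul_cancel₀ hS.ne'])
  simp only [mul_smul, ← Finset.smul_sum, norm_smul, norm_inv, Real.norm_of_nonneg hS.le]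
    at hnorm
  rw [← div_eq_inv_mul, lt_div_iff₀ hS] at hnorm
  exact hnorm.le

theorem exists_eq_sum_smul_of_tendsto_sum_smul {ι E : Type*} [Fintype ι]
    [NormedAddCommGroup E] [NormedSpace ℝ E]
    (x : ℕ → ι → E) (x₀ : ι → E) (hx : ∀ i, Tendsto (fun k => x k i) atTop (𝓝 (x₀ i)))
    (w : ℕ → ι → ℝ) (hw : ∀ k i, 0 ≤ w k i) (C : ℝ) (hC : ∀ k, ∑ i, w k i ≤ C)
    (v₀ : E) (hv : Tendsto (fun k => ∑ i, w k i • x k i) atTop (𝓝 v₀)) :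
    ∃ w₀ : ι → ℝ, (∀ i, 0 ≤ w₀ i) ∧ (∀ i, (∀ᶠ k in atTop, w k i = 0) → w₀ i = 0) ∧
      v₀ = ∑ i, w₀ i • x₀ i := by
  have hbox : ∀ k, w k ∈ Set.Icc 0 (fun _ => C) := fun k =>
    ⟨hw k, fun i => (Finset.single_le_sum (fun j _ => hw k j) (Finset.mem_univ i)).trans (hC k)⟩
  obtain ⟨w₀, hw₀, φ, hφ, hlim⟩ := isCompact_Icc.tendsto_subseq hbox
  have hlim_i : ∀ i, Tendsto (fun k => w (φ k) i) atTop (𝓝 (w₀ i)) :=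
    fun i => tendsto_pi_nhds.1 hlim i
  refine ⟨w₀, hw₀.1, fun i hi => ?_, ?_⟩
  · refine tendsto_nhds_unique (hlim_i i) (tendsto_const_nhds.congr' ?_)
    exact (hφ.tendsto_atTop.eventually hi).mono fun k hk => hk.symm
  · refine tendsto_nhds_unique (hv.comp hφ.tendsto_atTop) (tendsto_finsetSum _ fun i _ => ?_)
    exact (hlim_i i).smul ((hx i).comp hφ.tendsto_atTop)

open scoped Classical BigOperators

theorem stmt4_general {K : Type*} [MetricSpace K] (n r : ℕ)
    (ψ : Fin r → K → ℝ) (g : Fin r → K → EuclideanSpace ℝ (Fin n))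
    (hψ : ∀ i, Continuous (ψ i)) (hg : ∀ i, Continuous (g i))
    (η : ℝ) (hη : 0 < η)
    (hcq : ∀ p : K, (Finset.univ.filter (fun i => ψ i p = 0)).Nonempty →
      ∀ lam : Fin r → ℝ, (∀ i, 0 ≤ lam i) →
        ∑ i ∈ Finset.univ.filter (fun i => ψ i p = 0), lam i = 1 →
          ‖∑ i ∈ Finset.univ.filter (fun i => ψ i p = 0), lam i • g i p‖ > 2 * η)
    (p : ℕ → K) (p₀ : K) (hp : Filter.Tendsto p Filter.atTop (nhds p₀))
    (v : ℕ → EuclideanSpace ℝ (Fin n)) (v₀ : EuclideanSpace ℝ (Fin n))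
    (hv : ∀ k, ∃ lam : Fin r → ℝ, (∀ i, 0 ≤ lam i) ∧
      v k = ∑ i ∈ Finset.univ.filter (fun i => ψ i (p k) = 0), lam i • g i (p k))
    (hvlim : Filter.Tendsto v Filter.atTop (nhds v₀)) :
    ∃ lam : Fin r → ℝ, (∀ i, 0 ≤ lam i) ∧
      v₀ = ∑ i ∈ Finset.univ.filter (fun i => ψ i p₀ = 0), lam i • g i p₀ := by
  choose lam hlam hvk using hv
  set w : ℕ → Fin r → ℝ := fun k i => if ψ i (p k) = 0 then lam k i else 0
  have hw : ∀ k i, 0 ≤ w k i := fun k i => by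
    by_cases h : ψ i (p k) = 0 <;> simp [w, h, hlam k i]
  have hvw : ∀ k, v k = ∑ i, w k i • g i (p k) := fun k => by
    simp only [hvk k, Finset.sum_filter, w, ite_smul, zero_smul]
  obtain ⟨M, hM⟩ := hvlim.norm.bddAbove_range
  have hweight : ∀ k, ∑ i, w k i ≤ M / (2 * η) := fun k => by
    have hbound := mul_sum_le_norm_sum_smul _ (fun i => g i (p k)) _
      (fun w hw h1 => hcq (p k) (Finset.nonempty_of_sum_ne_zero (by rw [h1]; exact one_ne_zero))
        w hw h1) (lam k) (hlam k)
    rw [← hvk k] at hbound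
    rw [le_div_iff₀ (by positivity), mul_comm]
    simpa only [w, ← Finset.sum_filter] using hbound.trans (hM ⟨k, rfl⟩)
  obtain ⟨w₀, hw₀, hsupp, hv₀⟩ := exists_eq_sum_smul_of_tendsto_sum_smul
    (fun k i => g i (p k)) (fun i => g i p₀) (fun i => ((hg i).tendsto p₀).comp hp)
    w hw _ hweight v₀ (hvlim.congr hvw)
  refine ⟨w₀, hw₀, ?_⟩
  rw [hv₀, Finset.sum_filter]
  refine Finset.sum_congr rfl fun i _ => ?_
  split_ifs with h
  · rfl
  · have hinactive := (((hψ i).tendsto p₀).comp hp).eventually_ne h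
    rw [hsupp i (hinactive.mono fun k hk => if_neg hk), zero_smul]

theorem stmt4 {K : Type*} [MetricSpace K] [CompactSpace K] (n r : ℕ)
    (ψ : Fin r → K → ℝ) (g : Fin r → K → EuclideanSpace ℝ (Fin n))
    (hψ : ∀ i, Continuous (ψ i)) (hg : ∀ i, Continuous (g i))
    (η : ℝ) (hη : 0 < η)
    (hcq : ∀ p : K, (Finset.univ.filter (fun i => ψ i p = 0)).Nonempty →
      ∀ lam : Fin r → ℝ, (∀ i, 0 ≤ lam i) →
        ∑ i ∈ Finset.univ.filter (fun i => ψ i p = 0), lam i = 1 →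
          ‖∑ i ∈ Finset.univ.filter (fun i => ψ i p = 0), lam i • g i p‖ > 2 * η)
    (p : ℕ → K) (p₀ : K) (hp : Filter.Tendsto p Filter.atTop (nhds p₀))
    (v : ℕ → EuclideanSpace ℝ (Fin n)) (v₀ : EuclideanSpace ℝ (Fin n))
    (hv : ∀ k, ∃ lam : Fin r → ℝ, (∀ i, 0 ≤ lam i) ∧
      v k = ∑ i ∈ Finset.univ.filter (fun i => ψ i (p k) = 0), lam i • g i (p k))
    (hvlim : Filter.Tendsto v Filter.atTop (nhds v₀)) :
    ∃ lam : Fin r → ℝ, (∀ i, 0 ≤ lam i) ∧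
      v₀ = ∑ i ∈ Finset.univ.filter (fun i => ψ i p₀ = 0), lam i • g i p₀ :=
  stmt4_general n r ψ g hψ hg η hη hcq p p₀ hp v v₀ hv hvlim
end

section
/- Let v_1, …, v_m ∈ ℝ^n, f ∈ ℝ^n, θ_1, …, θ_m ∈ ℝ, λ_1, …, λ_m ≥ 0 with Λ := ∑_i λ_i > 0, and constants μ > 0, η > 0. Assume: (a) |θ_i + ⟨v_i, f⟩| ≤ μ for all i; (b) θ_i + ⟨v_i, f − ∑_j λ_j v_j⟩ = 0 for all i; (c) ‖∑_i β_i v_i‖ > 2η for every nonnegative family (β_i) with ∑_i β_i = 1. Then Λ ≤ μ / (4η²). -/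
/-!
Put `u = ∑ j, λ_j v_j` and `Λ = ∑ j, λ_j`. By (b) and (a), `⟨v_i, u⟩ ≤ μ` for every `i`, so
`‖u‖² = ∑ i, λ_i ⟨v_i, u⟩ ≤ μ Λ`. On the other hand `u / Λ` is a convex combination of the `v_i`,
so (c) gives `‖u‖ > 2 η Λ`. Hence `4 η² Λ² < μ Λ`.
-/

section

variable {ι E : Type*} [Fintype ι] [NormedAddCommGroup E] [InnerProductSpace ℝ E]

theorem norm_sum_smul_sq_le_of_inner_le (lam : ι → ℝ) (v : ι → E) (μ : ℝ)
    (hlam : ∀ i, 0 ≤ lam i) (h : ∀ i, inner ℝ (v i) (∑ j, lam j • v j) ≤ μ) :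
    ‖∑ i, lam i • v i‖ ^ 2 ≤ μ * ∑ i, lam i := by
  set u := ∑ j, lam j • v j
  calc ‖u‖ ^ 2 = ∑ i, lam i * inner ℝ (v i) u := by
        simp only [← real_inner_self_eq_norm_sq, u, sum_inner, real_inner_smul_left]
    _ ≤ ∑ i, lam i * μ := Finset.sum_le_sum fun i _ => mul_le_mul_of_nonneg_left (h i) (hlam i)
    _ = μ * ∑ i, lam i := by rw [← Finset.sum_mul, mul_comm]

theorem mul_sum_lt_norm_sum_smul (lam : ι → ℝ) (v : ι → E) (r : ℝ)
    (hlam : ∀ i, 0 ≤ lam i) (hΛ : 0 < ∑ i, lam i)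
    (h : ∀ β : ι → ℝ, (∀ i, 0 ≤ β i) → ∑ i, β i = 1 → r < ‖∑ i, β i • v i‖) :
    r * ∑ i, lam i < ‖∑ i, lam i • v i‖ := by
  set Λ := ∑ i, lam i
  have hconvex := h (fun i => lam i / Λ) (fun i => div_nonneg (hlam i) hΛ.le)
    (by rw [← Finset.sum_div, div_self hΛ.ne'])
  have hrescale : ∑ i, lam i • v i = Λ • ∑ i, (lam i / Λ) • v i := by
    simp only [Finset.smul_sum, smul_smul, mul_div_cancel₀ _ hΛ.ne']
  rw [hrescale, norm_smul, Real.norm_of_nonneg hΛ.le, mul_comm]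
  exact mul_lt_mul_of_pos_left hconvex hΛ

end

theorem stmt5_general (n m : ℕ) (v : Fin m → EuclideanSpace ℝ (Fin n))
    (f : EuclideanSpace ℝ (Fin n)) (θ lam : Fin m → ℝ)
    (hlam : ∀ i, 0 ≤ lam i) (hΛ : 0 < ∑ i, lam i)
    (μ η : ℝ) (hη : 0 < η)
    (ha : ∀ i, |θ i + (inner ℝ (v i) f : ℝ)| ≤ μ)
    (hb : ∀ i, θ i + (inner ℝ (v i) (f - ∑ j, lam j • v j) : ℝ) = 0)
    (hc : ∀ β : Fin m → ℝ, (∀ i, 0 ≤ β i) → ∑ i, β i = 1 → ‖∑ i, β i • v i‖ > 2 * η) :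
    ∑ i, lam i ≤ μ / (4 * η ^ 2) := by
  set Λ := ∑ i, lam i
  set u := ∑ j, lam j • v j
  have hinner : ∀ i, inner ℝ (v i) u ≤ μ := fun i => by
    have hbi := hb i
    rw [inner_sub_right] at hbi
    linarith [le_abs_self (θ i + inner ℝ (v i) f), ha i]
  have hupper : ‖u‖ ^ 2 ≤ μ * Λ := norm_sum_smul_sq_le_of_inner_le lam v μ hlam hinner
  have hlower : (2 * η * Λ) ^ 2 < ‖u‖ ^ 2 :=
    pow_lt_pow_left₀ (mul_sum_lt_norm_sum_smul lam v (2 * η) hlam hΛ hc) (by positivity)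
      two_ne_zero
  rw [le_div_iff₀ (by positivity)]
  nlinarith

theorem stmt5 (n m : ℕ) (v : Fin m → EuclideanSpace ℝ (Fin n))
    (f : EuclideanSpace ℝ (Fin n)) (θ lam : Fin m → ℝ)
    (hlam : ∀ i, 0 ≤ lam i) (hΛ : 0 < ∑ i, lam i)
    (μ η : ℝ) (hμ : 0 < μ) (hη : 0 < η)
    (ha : ∀ i, |θ i + (inner ℝ (v i) f : ℝ)| ≤ μ)
    (hb : ∀ i, θ i + (inner ℝ (v i) (f - ∑ j, lam j • v j) : ℝ) = 0)
    (hc : ∀ β : Fin m → ℝ, (∀ i, 0 ≤ β i) → ∑ i, β i = 1 → ‖∑ i, β i • v i‖ > 2 * η) :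
    ∑ i, lam i ≤ μ / (4 * η ^ 2) :=
  stmt5_general n m v f θ lam hlam hΛ μ η hη ha hb hc
end

section
/- Let C ⊆ ℝ^n, ρ > 0, x̄ ∈ C, and c ∈ C with ‖c − x̄‖ = ε for some 0 < ε < ρ. Suppose v ∈ ℝ^n satisfies the prox-normal inequality ⟨v, z − c⟩ ≤ (‖v‖ / (2ρ)) ‖z − c‖² for all z ∈ C, and suppose v = −λ (c − x̄) for some λ ≥ 0. Then λ = 0, i.e. v = 0. -/
/-! Testing the prox-normal inequality at `z = x̄`, where `v = λ (x̄ - c)`, gives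
`λ ε² ≤ λ ε³ / (2ρ)`, which forces `λ = 0` because `ε < 2ρ`. -/

open RealInnerProductSpace

lemma eq_zero_of_mul_sq_le_mul_div_mul_sq {lam r ρ : ℝ} (hlam : 0 ≤ lam) (hr : 0 < r)
    (hr2ρ : r < 2 * ρ) (h : lam * r ^ 2 ≤ lam * r / (2 * ρ) * r ^ 2) : lam = 0 := by
  have hρ : 0 < 2 * ρ := hr.trans hr2ρ
  have hfactor : r / (2 * ρ) < 1 := (div_lt_one hρ).mpr hr2ρ
  have hle : lam ≤ lam * (r / (2 * ρ)) := by
    have h' : lam * r ^ 2 ≤ lam * (r / (2 * ρ)) * r ^ 2 := by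
      calc lam * r ^ 2 ≤ lam * r / (2 * ρ) * r ^ 2 := h
        _ = lam * (r / (2 * ρ)) * r ^ 2 := by ring
    exact le_of_mul_le_mul_right h' (by positivity)
  nlinarith

lemma eq_zero_of_inner_smul_self_le {E : Type*} [NormedAddCommGroup E] [InnerProductSpace ℝ E]
    {u : E} {lam ρ : ℝ} (hlam : 0 ≤ lam) (hu : 0 < ‖u‖) (hu2ρ : ‖u‖ < 2 * ρ)
    (h : ⟪lam • u, u⟫ ≤ ‖lam • u‖ / (2 * ρ) * ‖u‖ ^ 2) : lam = 0 := by
  rw [real_inner_smul_left, real_inner_self_eq_norm_sq, norm_smul, Real.norm_of_nonneg hlam] at h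
  exact eq_zero_of_mul_sq_le_mul_div_mul_sq hlam hu hu2ρ h

theorem stmt7_general {n : ℕ} (C : Set (EuclideanSpace ℝ (Fin n))) (ρ ε : ℝ)
    (hε : 0 < ε) (hερ : ε < ρ)
    (xbar c : EuclideanSpace ℝ (Fin n)) (hxbar : xbar ∈ C)
    (hnorm : ‖c - xbar‖ = ε)
    (v : EuclideanSpace ℝ (Fin n)) (lam : ℝ) (hlam : 0 ≤ lam)
    (hprox : ∀ z ∈ C, (inner ℝ v (z - c) : ℝ) ≤ ‖v‖ / (2 * ρ) * ‖z - c‖ ^ 2)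
    (hv : v = (-lam) • (c - xbar)) :
    lam = 0 ∧ v = 0 := by
  have hv' : v = lam • (xbar - c) := by rw [hv, neg_smul, ← smul_neg, neg_sub]
  have hdist : ‖xbar - c‖ = ε := by rw [norm_sub_rev, hnorm]
  have hlam0 : lam = 0 := by
    refine eq_zero_of_inner_smul_self_le (ρ := ρ) hlam (hdist ▸ hε) (by linarith) ?_
    simpa only [hv'] using hprox xbar hxbar
  exact ⟨hlam0, by rw [hv', hlam0, zero_smul]⟩

theorem stmt7 {n : ℕ} (C : Set (EuclideanSpace ℝ (Fin n))) (ρ ε : ℝ)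
    (hε : 0 < ε) (hερ : ε < ρ)
    (xbar c : EuclideanSpace ℝ (Fin n)) (hxbar : xbar ∈ C) (hc : c ∈ C)
    (hnorm : ‖c - xbar‖ = ε)
    (v : EuclideanSpace ℝ (Fin n)) (lam : ℝ) (hlam : 0 ≤ lam)
    (hprox : ∀ z ∈ C, (inner ℝ v (z - c) : ℝ) ≤ ‖v‖ / (2 * ρ) * ‖z - c‖ ^ 2)
    (hv : v = (-lam) • (c - xbar)) :
    lam = 0 ∧ v = 0 :=
  stmt7_general C ρ ε hε hερ xbar c hxbar hnorm v lam hlam hprox hv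
end

section
/- Let δ > 0, y₀, d ∈ ℝ^l with ‖d − y₀‖ = δ, let y ∈ ℝ^l satisfy ‖y − y₀‖ ≤ δ and ‖y − d‖ ≤ δ/4, and let 0 < α < δ²/4. Then ‖(y − (2α/δ²)(d − y₀)) − y₀‖² < δ² − 2α; in particular, the translated point y − (2α/δ²)(d − y₀) lies in the open ball of radius √(δ² − 2α) centered at y₀. -/
open scoped InnerProductSpace

section RealInnerProductSpace

variable {E : Type*} [NormedAddCommGroup E] [InnerProductSpace ℝ E]

theorem norm_sq_sub_norm_sub_mul_norm_le_real_inner (u v : E) :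
    ‖u‖ ^ 2 - ‖v - u‖ * ‖u‖ ≤ ⟪v, u⟫_ℝ := by
  have hsplit : ⟪v, u⟫_ℝ = ⟪v - u, u⟫_ℝ + ‖u‖ ^ 2 := by
    rw [inner_sub_left, real_inner_self_eq_norm_sq]
    ring
  linarith [neg_abs_le ⟪v - u, u⟫_ℝ, abs_real_inner_le_norm (v - u) u]

theorem norm_sub_smul_sub_sq_lt {δ α : ℝ} (hδ : 0 < δ) (hα : 0 < α) (hα2 : α < δ ^ 2 / 4)
    {y₀ d y : E} (hd : ‖d - y₀‖ = δ) (hy : ‖y - y₀‖ ≤ δ) (hyd : ‖y - d‖ ≤ δ / 4) :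
    ‖(y - (2 * α / δ ^ 2) • (d - y₀)) - y₀‖ ^ 2 < δ ^ 2 - 2 * α := by
  set c := 2 * α / δ ^ 2
  have hc : c * δ ^ 2 = 2 * α := div_mul_cancel₀ _ (by positivity)
  have hc_lt : c < 1 / 2 := by rw [div_lt_iff₀ (by positivity)]; linarith
  have hinner : 3 * δ ^ 2 / 4 ≤ ⟪y - y₀, d - y₀⟫_ℝ := by
    have h := norm_sq_sub_norm_sub_mul_norm_le_real_inner (d - y₀) (y - y₀)
    rw [sub_sub_sub_cancel_right, hd] at h
    nlinarith
  have hy_sq : ‖y - y₀‖ ^ 2 ≤ δ ^ 2 := pow_le_pow_left₀ (norm_nonneg _) hy 2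
  calc ‖(y - c • (d - y₀)) - y₀‖ ^ 2
      = ‖y - y₀‖ ^ 2 - 2 * (c * ⟪y - y₀, d - y₀⟫_ℝ) + c ^ 2 * δ ^ 2 := by
        rw [sub_right_comm, norm_sub_sq_real, real_inner_smul_right, norm_smul, mul_pow, hd,
          Real.norm_eq_abs, sq_abs]
    _ ≤ δ ^ 2 - 2 * (c * (3 * δ ^ 2 / 4)) + c ^ 2 * δ ^ 2 := by gcongr
    _ = δ ^ 2 - 3 * α + c * (2 * α) := by linear_combination (c - 3 / 2) * hc
    _ < δ ^ 2 - 2 * α := by nlinarith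

end RealInnerProductSpace

theorem stmt10 {l : ℕ} (δ α : ℝ) (hδ : 0 < δ) (hα : 0 < α) (hα2 : α < δ ^ 2 / 4)
    (y₀ d y : EuclideanSpace ℝ (Fin l))
    (hd : ‖d - y₀‖ = δ) (hy : ‖y - y₀‖ ≤ δ) (hyd : ‖y - d‖ ≤ δ / 4) :
    ‖(y - (2 * α / δ ^ 2) • (d - y₀)) - y₀‖ ^ 2 < δ ^ 2 - 2 * α ∧
    (y - (2 * α / δ ^ 2) • (d - y₀)) ∈ Metric.ball y₀ (Real.sqrt (δ ^ 2 - 2 * α)) := by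
  have h := norm_sub_smul_sub_sq_lt hδ hα hα2 hd hy hyd
  exact ⟨h, by rw [Metric.mem_ball, dist_eq_norm]; exact (Real.lt_sqrt (norm_nonneg _)).2 h⟩
end
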